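/- Let C be an abelian category and (𝒞, 𝒲, 𝓕) a triple of classes of objects of C such that: 𝒲 is closed under direct summands and has the 2-out-of-3 property for short exact sequences (if 0 → X → Y → Z → 0 is exact and two of X, Y, Z lie in 𝒲, so does the third), and both (𝒞, 𝒲 ∩ 𝓕) and (𝒞 ∩ 𝒲, 𝓕) are complete cotorsion pairs in C. Let W be the class of morphisms w which can be written as w = p ∘ i with i a monomorphism whose cokernel lies in 𝒲 and p an epimorphism whose kernel lies in 𝒲. Then W is closed under retracts in the arrow category of C and satisfies the 2-out-of-3 property for composition: whenever f, g are composable morphisms and two of f, g, g∘f lie in W, so does the third. -/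

import Mathlib

open CategoryTheory CategoryTheory.Limits

universe v u

variable {C : Type u} [Category.{v} C] [Abelian C]

/-- `Ext¹(A, B) = 0`, phrased as: every short exact sequence `0 → B → E → A → 0`
splits. -/
def Ext1Zero (A B : C) : Prop :=
  ∀ (E : C) (i : B ⟶ E) (p : E ⟶ A) (w : i ≫ p = 0),
    (ShortComplex.mk i p w).ShortExact → ∃ s : A ⟶ E, s ≫ p = 𝟙 A

/-- The right `Ext¹`-orthogonal class `S^⊥` of a class of objects `S`. -/
def rightPerp (S : Set C) : Set C := {B | ∀ A ∈ S, Ext1Zero A B}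

/-- The left `Ext¹`-orthogonal class `⊥S` of a class of objects `S`. -/
def leftPerp (S : Set C) : Set C := {A | ∀ B ∈ S, Ext1Zero A B}

/-- `(𝓐, 𝓑)` is a cotorsion pair: `𝓐 = ⊥𝓑` and `𝓑 = 𝓐^⊥`. -/
structure IsCotorsionPair (𝓐 𝓑 : Set C) : Prop where
  left_eq : 𝓐 = leftPerp 𝓑
  right_eq : 𝓑 = rightPerp 𝓐

/-- `(𝓐, 𝓑)` is a complete cotorsion pair: a cotorsion pair admitting approximation
sequences `0 → X → B_X → A_X → 0` and `0 → B^X → A^X → X → 0` for every object `X`. -/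
structure IsCompleteCotorsionPair (𝓐 𝓑 : Set C) extends IsCotorsionPair 𝓐 𝓑 : Prop where
  approx₁ : ∀ X : C, ∃ (B A : C) (i : X ⟶ B) (p : B ⟶ A) (w : i ≫ p = 0),
    (ShortComplex.mk i p w).ShortExact ∧ B ∈ 𝓑 ∧ A ∈ 𝓐
  approx₂ : ∀ X : C, ∃ (B A : C) (i : B ⟶ A) (p : A ⟶ X) (w : i ≫ p = 0),
    (ShortComplex.mk i p w).ShortExact ∧ B ∈ 𝓑 ∧ A ∈ 𝓐


/-- The class `𝒲` is closed under direct summands (equivalently, retracts). -/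
def SummandClosed (𝒲 : Set C) : Prop :=
  ∀ (X W : C), W ∈ 𝒲 → (∃ (s : X ⟶ W) (r : W ⟶ X), s ≫ r = 𝟙 X) → X ∈ 𝒲

/-- The class `𝒲` has the 2-out-of-3 property for short exact sequences. -/
def TwoOutOfThreeSES (𝒲 : Set C) : Prop :=
  ∀ (X Y Z : C) (i : X ⟶ Y) (p : Y ⟶ Z) (w : i ≫ p = 0),
    (ShortComplex.mk i p w).ShortExact →
      (X ∈ 𝒲 → Y ∈ 𝒲 → Z ∈ 𝒲) ∧ (X ∈ 𝒲 → Z ∈ 𝒲 → Y ∈ 𝒲) ∧ (Y ∈ 𝒲 → Z ∈ 𝒲 → X ∈ 𝒲)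

/-- The class of weak equivalences associated to a class of trivial objects `𝒲`:
morphisms of the form `p ∘ i`, where `i` is a monomorphism with cokernel in `𝒲` and
`p` is an epimorphism with kernel in `𝒲`. -/
def Weq (𝒲 : Set C) {X Y : C} (h : X ⟶ Y) : Prop :=
  ∃ (Z : C) (i : X ⟶ Z) (p : Z ⟶ Y),
    i ≫ p = h ∧ Mono i ∧ cokernel i ∈ 𝒲 ∧ Epi p ∧ kernel p ∈ 𝒲

/-!
Call a monomorphism with cokernel in `𝒲` a trivial monomorphism, and an epimorphism with kernel
in `𝒲` a trivial epimorphism, so that weak equivalences are the composites of a trivial mono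
followed by a trivial epi. Applying the 2-out-of-3 property of `𝒲` to the exact sequence
`0 → ker f → ker (f ≫ g) → ker g → coker f → coker (f ≫ g) → coker g → 0` gives the
cancellation rules for trivial monos and epis; pushing out (or pulling back) a factorization
along a trivial mono or epi turns them into the cancellation rules for weak equivalences.
For composition, the middle part `p_f ≫ i_g` of `f ≫ g` is refactored through the complete
cotorsion pair `(𝒞, 𝒲 ∩ 𝓕)` as a monomorphism followed by a trivial epi, and that monomorphism
is then trivial. For retracts, factor `h` and `f` as a monomorphism with cokernel in `𝒞` followed
by an epimorphism with kernel in `𝒲 ∩ 𝓕`; the vanishing of `Ext¹` gives maps back and forth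
between the two factorizations whose composite is the identity up to a map through the kernel of
the epi, which makes the cokernel for `h` a direct summand of an object of `𝒲`.
-/

open Preadditive ZeroObject Category

namespace CategoryTheory

section KernelCokernelComp

variable {X Y Z : C} (f : X ⟶ Y) (g : Y ⟶ Z)

lemma shortExact_cokernel_comp [Mono g] :
    (ShortComplex.mk (cokernel.map f (f ≫ g) (𝟙 _) g (by simp))
      (cokernel.map (f ≫ g) g f (𝟙 _) (by simp)) (by ext; simp)).ShortExact := by
  have hS := kernelCokernelCompSequence_exact f g
  exact { exact := hS.exact 3
          mono_f := (hS.exact 2).mono_g ((isZero_kernel_of_mono g).eq_of_src _ _)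
          epi_g := inferInstanceAs (Epi ((kernelCokernelCompSequence f g).map' 4 5)) }

lemma shortExact_kernel_comp [Epi f] :
    (ShortComplex.mk (kernel.map f (f ≫ g) (𝟙 _) g (by simp))
      (kernel.map (f ≫ g) g f (𝟙 _) (by simp)) (by ext; simp)).ShortExact := by
  have hS := kernelCokernelCompSequence_exact f g
  exact { exact := hS.exact 0
          mono_f := inferInstanceAs (Mono ((kernelCokernelCompSequence f g).map' 0 1))
          epi_g := (hS.exact 1).epi_f ((isZero_cokernel_of_epi f).eq_of_tgt _ _) }

lemma shortExact_kernel_cokernel_cokernel_comp [Mono (f ≫ g)] [Epi g] :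
    (ShortComplex.mk (kernelCokernelCompSequence.δ f g)
      (cokernel.map f (f ≫ g) (𝟙 _) g (by simp))
      (by simp [kernelCokernelCompSequence.δ_fac])).ShortExact := by
  have hS := kernelCokernelCompSequence_exact f g
  exact { exact := hS.exact 2
          mono_f := (hS.exact 1).mono_g ((isZero_kernel_of_mono (f ≫ g)).eq_of_src _ _)
          epi_g := (hS.exact 3).epi_f ((isZero_cokernel_of_epi g).eq_of_tgt _ _) }

lemma shortExact_kernel_comp_kernel_cokernel [Mono f] [Epi (f ≫ g)] :
    (ShortComplex.mk (kernel.map (f ≫ g) g f (𝟙 _) (by simp))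
      (kernelCokernelCompSequence.δ f g)
      (by simp [kernelCokernelCompSequence.δ_fac])).ShortExact := by
  have hS := kernelCokernelCompSequence_exact f g
  exact { exact := hS.exact 1
          mono_f := (hS.exact 0).mono_g ((isZero_kernel_of_mono f).eq_of_src _ _)
          epi_g := (hS.exact 2).epi_f ((isZero_cokernel_of_epi (f ≫ g)).eq_of_tgt _ _) }

end KernelCokernelComp

noncomputable def ShortComplex.ShortExact.cokernelIso {S : ShortComplex C} (hS : S.ShortExact) :
    cokernel S.f ≅ S.X₃ :=
  (cokernelIsCokernel S.f).coconePointUniqueUpToIso hS.gIsCokernel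

noncomputable def ShortComplex.ShortExact.kernelIso {S : ShortComplex C} (hS : S.ShortExact) :
    kernel S.g ≅ S.X₁ :=
  (kernelIsKernel S.g).conePointUniqueUpToIso hS.fIsKernel

lemma IsPushout.shortExact {S : ShortComplex C} (hS : S.ShortExact) {F Q : C} {j : S.X₁ ⟶ F}
    {r : S.X₂ ⟶ Q} {b : F ⟶ Q} (sq : IsPushout S.f j r b) (d : Q ⟶ S.X₃) (hr : r ≫ d = S.g)
    (hb : b ≫ d = 0) : (ShortComplex.mk b d hb).ShortExact := by
  have := hS.mono_f
  have := hS.epi_g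
  refine .mk' ?_ ((MorphismProperty.monomorphisms C).of_isPushout sq.flip hS.mono_f)
    (epi_of_epi_fac hr)
  rw [ShortComplex.exact_iff_exact_up_to_refinements]
  intro T x hx
  obtain ⟨T', π, _, x₂, x₃, hπ⟩ := sq.hom_eq_add_up_to_refinements x
  have hx₂ : x₂ ≫ S.g = 0 := by
    have := π ≫= hx
    rw [reassoc_of% hπ] at this
    simpa [hr, hb] using this
  obtain ⟨T'', π', _, k, hk⟩ := hS.exact.exact_up_to_refinements x₂ hx₂
  refine ⟨T'', π' ≫ π, inferInstance, π' ≫ x₃ + k ≫ j, ?_⟩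
  simp [hπ, reassoc_of% hk, sq.w, add_comm]

end CategoryTheory

lemma Ext1Zero.of_iso {A A' B B' : C} (eA : A' ≅ A) (eB : B' ≅ B) (h : Ext1Zero A B) :
    Ext1Zero A' B' := by
  intro E i p w hS
  obtain ⟨s, hs⟩ := h E (eB.inv ≫ i) (p ≫ eA.hom) (by simp [reassoc_of% w]) <|
    ShortComplex.shortExact_of_iso (ShortComplex.isoMk eB (Iso.refl E) eA (by simp) (by simp)) hS
  exact ⟨eA.hom ≫ s, by simpa using eA.hom ≫= hs =≫ eA.inv⟩

/-- Splitting `0 → kernel q → cokernel s₀ → cokernel I → 0` gives a retraction of `kernel q`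
vanishing on `s₀`; subtracting it from the identity of `D` yields a map that descends along `q`. -/
lemma Ext1Zero.exists_section_extending {A D E : C} {q : D ⟶ E} [Epi q] {I : A ⟶ E} [Mono I]
    (hext : Ext1Zero (cokernel I) (kernel q)) (s₀ : A ⟶ D) (hs₀ : s₀ ≫ q = I) :
    ∃ σ : E ⟶ D, I ≫ σ = s₀ ∧ σ ≫ q = 𝟙 E := by
  subst hs₀
  have : Mono s₀ := mono_of_mono s₀ q
  have hS := shortExact_kernel_cokernel_cokernel_comp s₀ q
  obtain ⟨s, hs⟩ := hext _ _ _ _ hS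
  obtain ⟨r, hr⟩ : ∃ r, kernelCokernelCompSequence.δ s₀ q ≫ r = 𝟙 _ :=
    ⟨_, (ShortComplex.Splitting.ofExactOfSection _ hS.exact s hs hS.mono_f).f_r⟩
  rw [kernelCokernelCompSequence.δ_fac, neg_comp, neg_eq_iff_eq_neg, assoc] at hr
  have hφ : kernel.ι q ≫ (𝟙 D + cokernel.π s₀ ≫ r ≫ kernel.ι q) = 0 := by
    simp [reassoc_of% hr]
  refine ⟨Abelian.epiDesc q _ hφ, ?_, ?_⟩
  · simp [Abelian.comp_epiDesc]
  · simp [← cancel_epi q, reassoc_of% Abelian.comp_epiDesc]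

lemma Ext1Zero.exists_lift {A E X Y : C} {I : A ⟶ E} [Mono I] {p : X ⟶ Y} [Epi p]
    (hext : Ext1Zero (cokernel I) (kernel p)) (a : A ⟶ X) (b : E ⟶ Y) (w : I ≫ b = a ≫ p) :
    ∃ l : E ⟶ X, I ≫ l = a ∧ l ≫ p = b := by
  have sq := (IsPullback.of_hasPullback p b).flip
  have := isIso_kernel_map_of_isPullback sq
  obtain ⟨σ, hσ₁, hσ₂⟩ := (hext.of_iso (Iso.refl _) (asIso (kernel.map _ _ _ _ sq.w)))
    |>.exists_section_extending (pullback.lift a I w.symm) (pullback.lift_snd _ _ _)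
  refine ⟨σ ≫ pullback.fst p b, ?_, ?_⟩
  · rw [reassoc_of% hσ₁]
    exact pullback.lift_fst _ _ _
  · rw [assoc, pullback.condition, reassoc_of% hσ₂]

lemma mem_leftPerp_of_iso {𝒮 : Set C} {A A' : C} (e : A' ≅ A) (h : A ∈ leftPerp 𝒮) :
    A' ∈ leftPerp 𝒮 :=
  fun B hB ↦ (h B hB).of_iso e (Iso.refl B)

lemma mem_rightPerp_of_iso {𝒮 : Set C} {B B' : C} (e : B' ≅ B) (h : B ∈ rightPerp 𝒮) :
    B' ∈ rightPerp 𝒮 :=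
  fun A hA ↦ (h A hA).of_iso (Iso.refl A) e

/-- A splitting of `0 → B → E → S.X₂ → 0` is found by lifting against `0 ⟶ S.X₁`, then `S.f`. -/
lemma mem_leftPerp_of_shortExact {𝒮 : Set C} {S : ShortComplex C} (hS : S.ShortExact)
    (h₁ : S.X₁ ∈ leftPerp 𝒮) (h₃ : S.X₃ ∈ leftPerp 𝒮) : S.X₂ ∈ leftPerp 𝒮 := by
  intro B hB E i p w hT
  have := hS.mono_f
  have := hT.epi_g
  obtain ⟨l, -, hl⟩ := ((h₁ B hB).of_iso cokernelZeroIsoTarget hT.kernelIso).exists_lift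
    (I := (0 : 0 ⟶ S.X₁)) 0 S.f (by simp)
  obtain ⟨s, -, hs⟩ := ((h₃ B hB).of_iso hS.cokernelIso hT.kernelIso).exists_lift
    l (𝟙 _) (by simp [hl])
  exact ⟨s, hs⟩

section Factorization

variable {𝒜 ℬ : Set C}

lemma IsCompleteCotorsionPair.exists_factorization_of_epi (hpair : IsCompleteCotorsionPair 𝒜 ℬ)
    {M N : C} (φ : M ⟶ N) [Epi φ] :
    ∃ (E : C) (I : M ⟶ E) (P : E ⟶ N), I ≫ P = φ ∧ Mono I ∧ cokernel I ∈ 𝒜 ∧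
      Epi P ∧ kernel P ∈ ℬ := by
  obtain ⟨F, Q, j, c, w, hT, hF, hQ⟩ := hpair.approx₁ (kernel φ)
  have := hT.mono_f
  have hS : (ShortComplex.mk (kernel.ι φ) φ (kernel.condition φ)).ShortExact :=
    { exact := ShortComplex.exact_kernel φ }
  have sq := IsPushout.of_hasPushout (kernel.ι φ) j
  have hS' := sq.shortExact hS (pushout.desc φ 0 (by simp)) (pushout.inl_desc _ _ _)
    (pushout.inr_desc _ _ _)
  have : Mono (pushout.inl (kernel.ι φ) j) :=
    (MorphismProperty.monomorphisms C).of_isPushout sq hT.mono_f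
  have := isIso_cokernel_map_of_isPushout sq.flip
  refine ⟨_, _, _, pushout.inl_desc _ _ _, inferInstance, ?_, hS'.epi_g, ?_⟩
  · rw [hpair.left_eq] at hQ ⊢
    exact mem_leftPerp_of_iso
      ((asIso (cokernel.map _ _ _ _ sq.flip.w)).symm ≪≫ hT.cokernelIso) hQ
  · rw [hpair.right_eq] at hF ⊢
    exact mem_rightPerp_of_iso hS'.kernelIso hF

lemma IsCompleteCotorsionPair.exists_factorization (hpair : IsCompleteCotorsionPair 𝒜 ℬ)
    {A B : C} (h : A ⟶ B) :
    ∃ (E : C) (I : A ⟶ E) (P : E ⟶ B), I ≫ P = h ∧ Mono I ∧ cokernel I ∈ 𝒜 ∧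
      Epi P ∧ kernel P ∈ ℬ := by
  obtain ⟨K, Q, k, η, w, hT, -, hQ⟩ := hpair.approx₂ B
  have := hT.epi_g
  have : Epi (biprod.desc h η) := epi_of_epi_fac (biprod.inr_desc h η)
  obtain ⟨E, I, P, hIP, _, hI, _, hP⟩ := hpair.exists_factorization_of_epi (biprod.desc h η)
  refine ⟨E, biprod.inl ≫ I, P, by simp [hIP], inferInstance, ?_, inferInstance, hP⟩
  rw [hpair.left_eq] at hQ hI ⊢
  exact mem_leftPerp_of_shortExact (shortExact_cokernel_comp biprod.inl I)
    (mem_leftPerp_of_iso (ShortComplex.Splitting.ofHasBinaryBiproduct A Q).shortExact.cokernelIso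
      hQ) hI

end Factorization

structure IsTrivialMono (𝒲 : Set C) {X Y : C} (f : X ⟶ Y) : Prop where
  mono : Mono f
  cokernel_mem : cokernel f ∈ 𝒲

structure IsTrivialEpi (𝒲 : Set C) {X Y : C} (f : X ⟶ Y) : Prop where
  epi : Epi f
  kernel_mem : kernel f ∈ 𝒲

section TrivialMorphisms

variable {𝒲 : Set C}

lemma weq_iff {X Y : C} (h : X ⟶ Y) :
    Weq 𝒲 h ↔ ∃ (Z : C) (i : X ⟶ Z) (p : Z ⟶ Y),
      i ≫ p = h ∧ IsTrivialMono 𝒲 i ∧ IsTrivialEpi 𝒲 p := by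
  constructor
  · rintro ⟨Z, i, p, hip, hi, hci, hp, hkp⟩
    exact ⟨Z, i, p, hip, ⟨hi, hci⟩, ⟨hp, hkp⟩⟩
  · rintro ⟨Z, i, p, hip, ⟨hi, hci⟩, ⟨hp, hkp⟩⟩
    exact ⟨Z, i, p, hip, hi, hci, hp, hkp⟩

lemma SummandClosed.mem_of_iso (hsum : SummandClosed 𝒲) {X Y : C} (e : X ≅ Y) (hY : Y ∈ 𝒲) :
    X ∈ 𝒲 :=
  hsum X Y hY ⟨e.hom, e.inv, e.hom_inv_id⟩

lemma TwoOutOfThreeSES.mem_X₁ (h23 : TwoOutOfThreeSES 𝒲) {S : ShortComplex C}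
    (hS : S.ShortExact) (h₂ : S.X₂ ∈ 𝒲) (h₃ : S.X₃ ∈ 𝒲) : S.X₁ ∈ 𝒲 :=
  (h23 _ _ _ _ _ _ hS).2.2 h₂ h₃

lemma TwoOutOfThreeSES.mem_X₂ (h23 : TwoOutOfThreeSES 𝒲) {S : ShortComplex C}
    (hS : S.ShortExact) (h₁ : S.X₁ ∈ 𝒲) (h₃ : S.X₃ ∈ 𝒲) : S.X₂ ∈ 𝒲 :=
  (h23 _ _ _ _ _ _ hS).2.1 h₁ h₃

lemma TwoOutOfThreeSES.mem_X₃ (h23 : TwoOutOfThreeSES 𝒲) {S : ShortComplex C}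
    (hS : S.ShortExact) (h₁ : S.X₁ ∈ 𝒲) (h₂ : S.X₂ ∈ 𝒲) : S.X₃ ∈ 𝒲 :=
  (h23 _ _ _ _ _ _ hS).1 h₁ h₂

lemma SummandClosed.mem_of_id_eq_add (hsum : SummandClosed 𝒲) (h23 : TwoOutOfThreeSES 𝒲)
    {X Y Z : C} (a : X ⟶ Y) (b : Y ⟶ X) (c : X ⟶ Z) (d : Z ⟶ X) (h : a ≫ b + c ≫ d = 𝟙 X)
    (hY : Y ∈ 𝒲) (hZ : Z ∈ 𝒲) : X ∈ 𝒲 :=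
  hsum X (Y ⊞ Z) (h23.mem_X₂ (ShortComplex.Splitting.ofHasBinaryBiproduct Y Z).shortExact hY hZ)
    ⟨biprod.lift a c, biprod.desc b d, by simp [h]⟩

section Composition

variable {X Y Z : C} {f : X ⟶ Y} {g : Y ⟶ Z}

lemma IsTrivialMono.comp (h23 : TwoOutOfThreeSES 𝒲) (hf : IsTrivialMono 𝒲 f)
    (hg : IsTrivialMono 𝒲 g) : IsTrivialMono 𝒲 (f ≫ g) :=
  have := hf.mono
  have := hg.mono
  ⟨inferInstance, h23.mem_X₂ (shortExact_cokernel_comp f g) hf.cokernel_mem hg.cokernel_mem⟩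

lemma IsTrivialEpi.comp (h23 : TwoOutOfThreeSES 𝒲) (hf : IsTrivialEpi 𝒲 f)
    (hg : IsTrivialEpi 𝒲 g) : IsTrivialEpi 𝒲 (f ≫ g) :=
  have := hf.epi
  have := hg.epi
  ⟨inferInstance, h23.mem_X₂ (shortExact_kernel_comp f g) hf.kernel_mem hg.kernel_mem⟩

lemma IsTrivialEpi.of_precomp (h23 : TwoOutOfThreeSES 𝒲) (hf : IsTrivialEpi 𝒲 f)
    (hfg : IsTrivialEpi 𝒲 (f ≫ g)) : IsTrivialEpi 𝒲 g :=
  have := hf.epi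
  have := hfg.epi
  ⟨epi_of_epi f g, h23.mem_X₃ (shortExact_kernel_comp f g) hf.kernel_mem hfg.kernel_mem⟩

lemma IsTrivialEpi.of_precomp_isTrivialMono (h23 : TwoOutOfThreeSES 𝒲) (hf : IsTrivialMono 𝒲 f)
    (hfg : IsTrivialEpi 𝒲 (f ≫ g)) : IsTrivialEpi 𝒲 g :=
  have := hf.mono
  have := hfg.epi
  ⟨epi_of_epi f g,
    h23.mem_X₂ (shortExact_kernel_comp_kernel_cokernel f g) hfg.kernel_mem hf.cokernel_mem⟩

lemma IsTrivialMono.of_kernel_mem_of_isTrivialEpi_comp (h23 : TwoOutOfThreeSES 𝒲) [Mono f]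
    (hg : kernel g ∈ 𝒲) (hfg : IsTrivialEpi 𝒲 (f ≫ g)) : IsTrivialMono 𝒲 f :=
  have := hfg.epi
  ⟨inferInstance, h23.mem_X₃ (shortExact_kernel_comp_kernel_cokernel f g) hfg.kernel_mem hg⟩

lemma IsTrivialMono.of_postcomp_isTrivialEpi (h23 : TwoOutOfThreeSES 𝒲) (hg : IsTrivialEpi 𝒲 g)
    (hfg : IsTrivialMono 𝒲 (f ≫ g)) : IsTrivialMono 𝒲 f :=
  have := hg.epi
  have := hfg.mono
  ⟨mono_of_mono f g,
    h23.mem_X₂ (shortExact_kernel_cokernel_cokernel_comp f g) hg.kernel_mem hfg.cokernel_mem⟩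

lemma IsTrivialMono.of_postcomp (h23 : TwoOutOfThreeSES 𝒲) (hg : IsTrivialMono 𝒲 g)
    (hfg : IsTrivialMono 𝒲 (f ≫ g)) : IsTrivialMono 𝒲 f :=
  have := hg.mono
  have := hfg.mono
  ⟨mono_of_mono f g,
    h23.mem_X₁ (shortExact_cokernel_comp f g) hfg.cokernel_mem hg.cokernel_mem⟩

end Composition

section BaseChange

variable {X₁ X₂ X₃ X₄ : C} {t : X₁ ⟶ X₂} {l : X₁ ⟶ X₃} {r : X₂ ⟶ X₄} {b : X₃ ⟶ X₄}

lemma cokernel_mem_iff_of_isPushout (hsum : SummandClosed 𝒲) (sq : IsPushout t l r b) :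
    cokernel t ∈ 𝒲 ↔ cokernel b ∈ 𝒲 :=
  have := isIso_cokernel_map_of_isPushout sq
  ⟨hsum.mem_of_iso (asIso (cokernel.map _ _ _ _ sq.w)).symm,
    hsum.mem_of_iso (asIso (cokernel.map _ _ _ _ sq.w))⟩

lemma IsTrivialMono.of_isPushout (hsum : SummandClosed 𝒲) (sq : IsPushout t l r b)
    (hl : IsTrivialMono 𝒲 l) : IsTrivialMono 𝒲 r :=
  ⟨(MorphismProperty.monomorphisms C).of_isPushout sq hl.mono,
    (cokernel_mem_iff_of_isPushout hsum sq.flip).1 hl.cokernel_mem⟩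

lemma IsTrivialEpi.of_isPushout (hsum : SummandClosed 𝒲) (sq : IsPushout t l r b) [Mono t]
    (hl : IsTrivialEpi 𝒲 l) : IsTrivialEpi 𝒲 r :=
  have := Abelian.epi_kernel_map_of_isPushout sq.flip
  have : Mono (kernel.map _ _ _ _ sq.flip.w) := mono_of_mono_fac (kernel.lift_ι _ _ _)
  have := isIso_of_mono_of_epi (kernel.map _ _ _ _ sq.flip.w)
  ⟨(MorphismProperty.epimorphisms C).of_isPushout sq hl.epi,
    hsum.mem_of_iso (asIso (kernel.map _ _ _ _ sq.flip.w)).symm hl.kernel_mem⟩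

lemma IsTrivialEpi.of_isPullback (hsum : SummandClosed 𝒲) (sq : IsPullback t l r b)
    (hr : IsTrivialEpi 𝒲 r) : IsTrivialEpi 𝒲 l :=
  have := isIso_kernel_map_of_isPullback sq.flip
  ⟨(MorphismProperty.epimorphisms C).of_isPullback sq hr.epi,
    hsum.mem_of_iso (asIso (kernel.map _ _ _ _ sq.flip.w)) hr.kernel_mem⟩

lemma IsTrivialMono.of_isPullback (hsum : SummandClosed 𝒲) (sq : IsPullback t l r b) [Epi b]
    (hr : IsTrivialMono 𝒲 r) : IsTrivialMono 𝒲 l :=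
  have := Abelian.mono_cokernel_map_of_isPullback sq.flip
  have : Epi (cokernel.map _ _ _ _ sq.flip.w) := epi_of_epi_fac (cokernel.π_desc _ _ _)
  have := isIso_of_mono_of_epi (cokernel.map _ _ _ _ sq.flip.w)
  ⟨(MorphismProperty.monomorphisms C).of_isPullback sq hr.mono,
    hsum.mem_of_iso (asIso (cokernel.map _ _ _ _ sq.flip.w)) hr.cokernel_mem⟩

end BaseChange

end TrivialMorphisms

section WeakEquivalences

variable {𝒲 : Set C}

/-- `j` is the pushout of `I` along `x`. -/
lemma exists_factorization_of_comp_eq (hsum : SummandClosed 𝒲) (h23 : TwoOutOfThreeSES 𝒲)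
    {X M E Z : C} {x : X ⟶ M} (hx : IsTrivialMono 𝒲 x ∨ IsTrivialEpi 𝒲 x) {I : X ⟶ E} [Mono I]
    {P : E ⟶ Z} (hP : IsTrivialEpi 𝒲 P) (g : M ⟶ Z) (w : I ≫ P = x ≫ g) :
    ∃ (Q : C) (j : M ⟶ Q) (u : Q ⟶ Z), j ≫ u = g ∧ IsTrivialEpi 𝒲 u ∧ Mono j ∧
      (cokernel j ∈ 𝒲 ↔ cokernel I ∈ 𝒲) := by
  have sq := IsPushout.of_hasPushout I x
  have hP' : IsTrivialEpi 𝒲 (pushout.inl I x ≫ pushout.desc P g w) := by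
    rwa [pushout.inl_desc]
  refine ⟨_, _, _, pushout.inr_desc P g w, ?_,
    (MorphismProperty.monomorphisms C).of_isPushout sq.flip ‹_›,
    (cokernel_mem_iff_of_isPushout hsum sq).symm⟩
  rcases hx with hx | hx
  · exact IsTrivialEpi.of_precomp_isTrivialMono h23 (hx.of_isPushout hsum sq) hP'
  · exact (hx.of_isPushout hsum sq).of_precomp h23 hP'

lemma IsTrivialMono.of_comp_eq (hsum : SummandClosed 𝒲) (h23 : TwoOutOfThreeSES 𝒲)
    {X M E Z : C} {x : X ⟶ M} {y : M ⟶ Z} (hx : IsTrivialMono 𝒲 x ∨ IsTrivialEpi 𝒲 x)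
    (hy : IsTrivialMono 𝒲 y ∨ IsTrivialEpi 𝒲 y) {I : X ⟶ E} [Mono I] {P : E ⟶ Z}
    (hP : IsTrivialEpi 𝒲 P) (w : I ≫ P = x ≫ y) : IsTrivialMono 𝒲 I := by
  obtain ⟨Q, j, u, rfl, hu, _, hj⟩ := exists_factorization_of_comp_eq hsum h23 hx hP y w
  refine ⟨‹_›, hj.1 ?_⟩
  rcases hy with hy | hy
  · exact (hy.of_postcomp_isTrivialEpi h23 hu).cokernel_mem
  · exact (IsTrivialMono.of_kernel_mem_of_isTrivialEpi_comp h23 hu.kernel_mem hy).cokernel_mem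

lemma Weq.of_precomp_isTrivial (hsum : SummandClosed 𝒲) (h23 : TwoOutOfThreeSES 𝒲)
    {X M Z : C} {x : X ⟶ M} {g : M ⟶ Z} (hx : IsTrivialMono 𝒲 x ∨ IsTrivialEpi 𝒲 x)
    (h : Weq 𝒲 (x ≫ g)) : Weq 𝒲 g := by
  obtain ⟨E, I, P, hIP, hI, hP⟩ := (weq_iff _).1 h
  have := hI.mono
  obtain ⟨Q, j, u, hju, hu, _, hj⟩ := exists_factorization_of_comp_eq hsum h23 hx hP g hIP
  exact (weq_iff g).2 ⟨Q, j, u, hju, ⟨‹_›, hj.2 hI.cokernel_mem⟩, hu⟩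

lemma Weq.of_postcomp_isTrivial (hsum : SummandClosed 𝒲) (h23 : TwoOutOfThreeSES 𝒲)
    {X M Z : C} {g : X ⟶ M} {y : M ⟶ Z} (hy : IsTrivialMono 𝒲 y ∨ IsTrivialEpi 𝒲 y)
    (h : Weq 𝒲 (g ≫ y)) : Weq 𝒲 g := by
  obtain ⟨E, I, P, hIP, hI, hP⟩ := (weq_iff _).1 h
  have := hP.epi
  have sq := IsPullback.of_hasPullback P y
  have hl : IsTrivialMono 𝒲 (pullback.lift I g hIP ≫ pullback.fst P y) := by
    rwa [pullback.lift_fst]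
  refine (weq_iff g).2 ⟨_, _, _, pullback.lift_snd I g hIP, ?_, hP.of_isPullback hsum sq⟩
  rcases hy with hy | hy
  · exact (hy.of_isPullback hsum sq.flip).of_postcomp h23 hl
  · exact hl.of_postcomp_isTrivialEpi h23 (hy.of_isPullback hsum sq.flip)

variable {X Y Z : C} {f : X ⟶ Y} {g : Y ⟶ Z}

lemma Weq.of_precomp (hsum : SummandClosed 𝒲) (h23 : TwoOutOfThreeSES 𝒲) (hf : Weq 𝒲 f)
    (hfg : Weq 𝒲 (f ≫ g)) : Weq 𝒲 g := by
  obtain ⟨_, i, p, rfl, hi, hp⟩ := (weq_iff f).1 hf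
  rw [assoc] at hfg
  exact .of_precomp_isTrivial hsum h23 (.inr hp) (.of_precomp_isTrivial hsum h23 (.inl hi) hfg)

lemma Weq.of_postcomp (hsum : SummandClosed 𝒲) (h23 : TwoOutOfThreeSES 𝒲) (hg : Weq 𝒲 g)
    (hfg : Weq 𝒲 (f ≫ g)) : Weq 𝒲 f := by
  obtain ⟨_, i, p, rfl, hi, hp⟩ := (weq_iff g).1 hg
  rw [← assoc] at hfg
  exact .of_postcomp_isTrivial hsum h23 (.inl hi) (.of_postcomp_isTrivial hsum h23 (.inr hp) hfg)

lemma Weq.comp (hsum : SummandClosed 𝒲) (h23 : TwoOutOfThreeSES 𝒲) {𝒞 𝓕 : Set C}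
    (hpair : IsCompleteCotorsionPair 𝒞 (𝒲 ∩ 𝓕)) (hf : Weq 𝒲 f) (hg : Weq 𝒲 g) :
    Weq 𝒲 (f ≫ g) := by
  obtain ⟨_, i, p, rfl, hi, hp⟩ := (weq_iff f).1 hf
  obtain ⟨_, i', p', rfl, hi', hp'⟩ := (weq_iff g).1 hg
  obtain ⟨E, I, P, hIP, _, -, _, hP, -⟩ := hpair.exists_factorization (p ≫ i')
  have hI := IsTrivialMono.of_comp_eq hsum h23 (.inr hp) (.inl hi') ⟨‹_›, hP⟩ hIP
  refine (weq_iff _).2 ⟨E, i ≫ I, P ≫ p', ?_, hi.comp h23 hI, IsTrivialEpi.comp h23 ⟨‹_›, hP⟩ hp'⟩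
  simp [reassoc_of% hIP]

/-- `L ≫ R - 𝟙 E` vanishes on `I` and after `P`, so it factors through `cokernel I ⟶ kernel P`;
hence the identity of `cokernel I` factors through `cokernel I' ⊞ kernel P`. -/
lemma cokernel_mem_of_retract (hsum : SummandClosed 𝒲) (h23 : TwoOutOfThreeSES 𝒲)
    {A E B A' E' : C} {I : A ⟶ E} {P : E ⟶ B} {I' : A' ⟶ E'} {L : E ⟶ E'} {R : E' ⟶ E}
    {a : A ⟶ A'} {a' : A' ⟶ A} (ha : a ≫ a' = 𝟙 A) (hL : I ≫ L = a ≫ I') (hR : I' ≫ R = a' ≫ I)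
    (hLR : L ≫ R ≫ P = P) (hI' : cokernel I' ∈ 𝒲) (hP : kernel P ∈ 𝒲) : cokernel I ∈ 𝒲 := by
  have h₁ : (L ≫ R - 𝟙 E) ≫ P = 0 := by simp [hLR]
  have h₂ : I ≫ kernel.lift P _ h₁ = 0 := by ext; simp [reassoc_of% hL, hR, reassoc_of% ha]
  refine hsum.mem_of_id_eq_add h23 (cokernel.map I I' a L hL) (cokernel.map I' I a' R hR)
    (-cokernel.desc I _ h₂) (kernel.ι P ≫ cokernel.π I) ?_ hI' hP
  ext
  simp

lemma Weq.of_retract {𝒞 𝓕 : Set C} (hsum : SummandClosed 𝒲) (h23 : TwoOutOfThreeSES 𝒲)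
    (hpair₁ : IsCompleteCotorsionPair 𝒞 (𝒲 ∩ 𝓕)) (hpair₂ : IsCompleteCotorsionPair (𝒞 ∩ 𝒲) 𝓕)
    {A B : C} {h : A ⟶ B} (hf : Weq 𝒲 f) {iA : A ⟶ X} {rA : X ⟶ A} {iB : B ⟶ Y} {rB : Y ⟶ B}
    (hA : iA ≫ rA = 𝟙 A) (hB : iB ≫ rB = 𝟙 B) (h₁ : iA ≫ f = h ≫ iB) (h₂ : f ≫ rB = rA ≫ h) :
    Weq 𝒲 h := by
  obtain ⟨_, i, p, rfl, hi, hp⟩ := (weq_iff f).1 hf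
  obtain ⟨E, I, P, rfl, _, hI, _, hP⟩ := hpair₁.exists_factorization h
  obtain ⟨E', I', P', hIP', _, hI'𝒞, _, hP'⟩ := hpair₁.exists_factorization (i ≫ p)
  have hI' : IsTrivialMono 𝒲 I' := .of_comp_eq hsum h23 (.inl hi) (.inr hp) ⟨‹_›, hP'.1⟩ hIP'
  rw [hpair₁.left_eq] at hI
  have hI'' : cokernel I' ∈ leftPerp 𝓕 := hpair₂.left_eq ▸ ⟨hI'𝒞, hI'.cokernel_mem⟩
  obtain ⟨L, hL, hLP⟩ := (hI _ hP').exists_lift (iA ≫ I') (P ≫ iB) (by simp [hIP', h₁])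
  obtain ⟨R, hR, hRP⟩ := (hI'' _ hP.2).exists_lift (rA ≫ I) (P' ≫ rB)
    (by simpa [reassoc_of% hIP'] using h₂)
  refine (weq_iff _).2 ⟨E, I, P, rfl, ⟨‹_›, ?_⟩, ⟨‹_›, hP.1⟩⟩
  exact cokernel_mem_of_retract hsum h23 hA hL hR (by simp [hRP, reassoc_of% hLP, hB])
    hI'.cokernel_mem hP.1

end WeakEquivalences

/-- Let `C` be an abelian category and `(𝒞, 𝒲, 𝓕)` a triple of classes of objects such
that `𝒲` is closed under direct summands and has the 2-out-of-3 property for short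
exact sequences, and `(𝒞, 𝒲 ∩ 𝓕)` and `(𝒞 ∩ 𝒲, 𝓕)` are complete cotorsion pairs.
Then the associated class `W` of weak equivalences is closed under retracts in the
arrow category and satisfies the 2-out-of-3 property for composition. -/
theorem stmt_7 (𝒞 𝒲 𝓕 : Set C)
    (hsum : SummandClosed 𝒲) (h23 : TwoOutOfThreeSES 𝒲)
    (hpair₁ : IsCompleteCotorsionPair 𝒞 (𝒲 ∩ 𝓕))
    (hpair₂ : IsCompleteCotorsionPair (𝒞 ∩ 𝒲) 𝓕) :
    (∀ {A B X Y : C} (h : A ⟶ B) (f : X ⟶ Y),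
      Weq 𝒲 f →
      ∀ (iA : A ⟶ X) (rA : X ⟶ A) (iB : B ⟶ Y) (rB : Y ⟶ B),
        iA ≫ rA = 𝟙 A → iB ≫ rB = 𝟙 B → iA ≫ f = h ≫ iB → f ≫ rB = rA ≫ h →
        Weq 𝒲 h) ∧
    (∀ {X Y Z : C} (f : X ⟶ Y) (g : Y ⟶ Z),
      (Weq 𝒲 f → Weq 𝒲 g → Weq 𝒲 (f ≫ g)) ∧
      (Weq 𝒲 f → Weq 𝒲 (f ≫ g) → Weq 𝒲 g) ∧
      (Weq 𝒲 g → Weq 𝒲 (f ≫ g) → Weq 𝒲 f)) :=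
  ⟨fun _ _ hf _ _ _ _ hA hB h₁ h₂ ↦ hf.of_retract hsum h23 hpair₁ hpair₂ hA hB h₁ h₂,
    fun _ _ ↦ ⟨Weq.comp hsum h23 hpair₁, Weq.of_precomp hsum h23, Weq.of_postcomp hsum h23⟩⟩
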